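/- Let $\omega$ with $\mathrm{Im}(\omega) > 0$ and for $k = \omega a - b$ with $a, b \in \mathbb{R}$ define $g_k(\zeta) = e^{2\pi\zeta(k - \bar k)/\sqrt{3}} \cdot \frac{\theta_1(\zeta + k|\omega)}{\theta_1(\zeta|\omega)}$ where here $\omega = e^{2\pi i/3}$. Setting $g_{\mathbf{k}}(z) := g_k(3z/(4\pi i \omega))$ with $\mathbf{k} = \sqrt{3}\,\omega k$, one has $g_{\mathbf{k}}(z + \mathbf{a}) = e^{i\langle \mathbf{a}, \mathbf{k}\rangle} g_{\mathbf{k}}(z)$ for every lattice vector $\mathbf{a} = n_1\zeta_1 + n_2\zeta_2 \in \Gamma$, where $\langle z, w\rangle := \mathrm{Re}(z\bar w)$. -/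

import Mathlib

open Complex

noncomputable def ω : ℂ := Complex.exp (2 * Real.pi * Complex.I / 3)
noncomputable def ζ₁ : ℂ := 4 * Real.pi * Complex.I * ω / 3
noncomputable def ζ₂ : ℂ := 4 * Real.pi * Complex.I * ω ^ 2 / 3

/-- The Jacobi theta function `θ₁(ζ|τ)`. -/
noncomputable def theta1 (ζ τ : ℂ) : ℂ :=
  -∑' n : ℤ, Complex.exp (Real.pi * Complex.I * ((n : ℂ) + 1 / 2) ^ 2 * τ +
      2 * Real.pi * Complex.I * ((n : ℂ) + 1 / 2) * (ζ + 1 / 2))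

noncomputable def gsmall (k ζ : ℂ) : ℂ :=
  Complex.exp (2 * Real.pi * ζ * (k - starRingEnd ℂ k) / Real.sqrt 3) *
    (theta1 (ζ + k) ω / theta1 ζ ω)

noncomputable def gBloch (k z : ℂ) : ℂ :=
  gsmall k (3 * z / (4 * Real.pi * Complex.I * ω))

/-!
The substitution `ζ = 3z/(4πiω)` carries `n₁ζ₁ + n₂ζ₂` to `n₁ + n₂ω`, so the claim is a statement
about `gsmall` under shifts by the period lattice `ℤ + ℤω` of `θ₁`. Such a shift multiplies
`θ₁(ζ + k)/θ₁(ζ)` by `e^{-2πink}`, and, since `k - k̄ = √3 a i`, the exponential prefactor by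
`e^{2πia(m + nω)}`; their product `e^{2πi(ma + nb)}` is exactly `e^{i⟨a, K⟩}`.
-/

lemma ω_eq : ω = (-(1 / 2) : ℝ) + ((Real.sqrt 3 / 2 : ℝ) : ℂ) * I := by
  have hcos : Real.cos (2 * Real.pi / 3) = -(1 / 2) := by
    rw [show 2 * Real.pi / 3 = Real.pi - Real.pi / 3 by ring, Real.cos_pi_sub,
      Real.cos_pi_div_three]
  have hsin : Real.sin (2 * Real.pi / 3) = Real.sqrt 3 / 2 := by
    rw [show 2 * Real.pi / 3 = Real.pi - Real.pi / 3 by ring, Real.sin_pi_sub,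
      Real.sin_pi_div_three]
  rw [ω, show 2 * Real.pi * I / 3 = ((2 * Real.pi / 3 : ℝ) : ℂ) * I by push_cast; ring,
    exp_mul_I, ← ofReal_cos, ← ofReal_sin, hcos, hsin]

/-- Shifting `ζ` by `m + nτ` multiplies the `j`-th term of the series by a factor independent
of `j` and moves it to index `j + n`. -/
theorem theta1_add_int_add_int_mul (ζ τ : ℂ) (m n : ℤ) :
    theta1 (ζ + (m + n * τ)) τ =
      exp (Real.pi * I * m - Real.pi * I * n - Real.pi * I * n ^ 2 * τ
        - 2 * Real.pi * I * n * ζ) * theta1 ζ τ := by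
  set c : ℂ := Real.pi * I * m - Real.pi * I * n - Real.pi * I * n ^ 2 * τ
    - 2 * Real.pi * I * n * ζ
  set term : ℤ → ℂ := fun j => exp (Real.pi * I * ((j : ℂ) + 1 / 2) ^ 2 * τ +
      2 * Real.pi * I * ((j : ℂ) + 1 / 2) * (ζ + 1 / 2))
  have hterm : ∀ j : ℤ, exp (Real.pi * I * ((j : ℂ) + 1 / 2) ^ 2 * τ +
      2 * Real.pi * I * ((j : ℂ) + 1 / 2) * (ζ + (m + n * τ) + 1 / 2)) =
      exp c * term (j + n) := by
    intro j
    have hexp : Real.pi * I * ((j : ℂ) + 1 / 2) ^ 2 * τ +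
        2 * Real.pi * I * ((j : ℂ) + 1 / 2) * (ζ + (m + n * τ) + 1 / 2) =
        c + (Real.pi * I * (((j + n : ℤ) : ℂ) + 1 / 2) ^ 2 * τ +
          2 * Real.pi * I * (((j + n : ℤ) : ℂ) + 1 / 2) * (ζ + 1 / 2)) +
        ((j * m : ℤ) : ℂ) * (2 * Real.pi * I) := by
      push_cast; ring
    rw [hexp, exp_add, exp_add, exp_int_mul_two_pi_mul_I, mul_one]
  have hshift : ∑' j : ℤ, term (j + n) = ∑' j : ℤ, term j := (Equiv.addRight n).tsum_eq term
  rw [theta1, theta1, tsum_congr hterm, tsum_mul_left, hshift, mul_neg]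

theorem theta1_ratio_add_int_add_int_mul (ζ k τ : ℂ) (m n : ℤ) :
    theta1 (ζ + (m + n * τ) + k) τ / theta1 (ζ + (m + n * τ)) τ =
      exp (-(2 * Real.pi * I * n * k)) * (theta1 (ζ + k) τ / theta1 ζ τ) := by
  rw [add_right_comm, theta1_add_int_add_int_mul, theta1_add_int_add_int_mul,
    mul_div_mul_comm, ← exp_sub]
  congr 2
  ring

lemma ω_mul_sub_sub_conj (a b : ℝ) : ω * a - b - starRingEnd ℂ (ω * a - b) =
    Real.sqrt 3 * a * I := by
  simp only [map_mul, map_sub, conj_ofReal, ω_eq, map_add, conj_I]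
  push_cast
  ring

/-- The prefactor contributes `e^{2πia(m + nω)}` and the theta quotient `e^{-2πin(ωa - b)}`. -/
theorem gsmall_add_int_add_int_mul_ω (a b : ℝ) (m n : ℤ) (ζ : ℂ) :
    gsmall (ω * a - b) (ζ + (m + n * ω)) =
      exp (2 * Real.pi * I * (m * a + n * b)) * gsmall (ω * a - b) ζ := by
  have hs3 : ((Real.sqrt 3 : ℝ) : ℂ) ≠ 0 := by
    exact_mod_cast (Real.sqrt_pos.mpr (by norm_num : (0 : ℝ) < 3)).ne'
  rw [gsmall, gsmall, theta1_ratio_add_int_add_int_mul,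
    ← mul_assoc, ← mul_assoc, ← exp_add, ← exp_add, ω_mul_sub_sub_conj]
  congr 2
  field_simp
  ring

lemma lattice_eq_mul_ω (n₁ n₂ : ℤ) :
    (n₁ * ζ₁ + n₂ * ζ₂ : ℂ) = 4 * Real.pi * I * ω / 3 * (n₁ + n₂ * ω) := by
  rw [ζ₁, ζ₂]
  ring

lemma div_add_lattice (z : ℂ) (n₁ n₂ : ℤ) :
    3 * (z + (n₁ * ζ₁ + n₂ * ζ₂)) / (4 * Real.pi * I * ω) =
      3 * z / (4 * Real.pi * I * ω) + (n₁ + n₂ * ω) := by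
  have hπ : (Real.pi : ℂ) ≠ 0 := ofReal_ne_zero.mpr Real.pi_ne_zero
  have hω : ω ≠ 0 := exp_ne_zero _
  rw [lattice_eq_mul_ω]
  field_simp

lemma re_lattice_mul_conj (a b : ℝ) (n₁ n₂ : ℤ) :
    ((n₁ * ζ₁ + n₂ * ζ₂) * starRingEnd ℂ (Real.sqrt 3 * ω * (ω * a - b))).re =
      2 * Real.pi * (n₁ * a + n₂ * b) := by
  have hs3 : Real.sqrt 3 ^ 2 = 3 := Real.sq_sqrt (by norm_num)
  rw [lattice_eq_mul_ω, ω_eq]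
  simp only [map_mul, map_sub, map_add, conj_ofReal, conj_I, mul_re, mul_im, add_re, add_im,
    sub_re, sub_im, neg_re, neg_im, ofReal_re, ofReal_im, I_re, I_im, intCast_re, intCast_im,
    div_ofNat_re, div_ofNat_im, re_ofNat, im_ofNat]
  linear_combination Real.pi * (n₁ * a + n₂ * b) / 6 * (Real.sqrt 3 ^ 2 + 4) * hs3

theorem gBloch_periodicity (a b : ℝ) (k : ℂ) (hk : k = ω * a - b)
    (K : ℂ) (hK : K = Real.sqrt 3 * ω * k) (n₁ n₂ : ℤ) (z : ℂ) :
    gBloch k (z + (n₁ * ζ₁ + n₂ * ζ₂)) =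
      Complex.exp (Complex.I *
          ((((n₁ * ζ₁ + n₂ * ζ₂) * starRingEnd ℂ K).re : ℝ) : ℂ)) *
        gBloch k z := by
  subst hk hK
  rw [gBloch, gBloch, div_add_lattice, gsmall_add_int_add_int_mul_ω, re_lattice_mul_conj]
  push_cast
  ring_nf
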